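/- Let H be a complex Hilbert space and let V : H → H be a bounded linear operator. Define the bounded linear operator A on the product space H × H by A(p, q) = (V q, V p). Then the spectrum of A equals the union of the spectrum of V and the spectrum of −V: σ(A) = σ(V) ∪ (−σ(V)), where −σ(V) = {−λ : λ ∈ σ(V)}. -/
import Mathlib


/-- For a bounded operator `V` on a complex Hilbert space `H`, the operator
`A : H × H → H × H`, `A(p,q) = (Vq, Vp)` (i.e. `A = [[0, V],[V, 0]]`), has spectrum
`σ(A) = σ(V) ∪ (-σ(V))`. -/
theorem stmt_11 {H : Type*} [NormedAddCommGroup H] [InnerProductSpace ℂ H] [CompleteSpace H]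
    (V : H →L[ℂ] H) :
    spectrum ℂ ((V.comp (ContinuousLinearMap.snd ℂ H H)).prod
        (V.comp (ContinuousLinearMap.fst ℂ H H)))
      = spectrum ℂ V ∪ (-spectrum ℂ V) := by
  set A := (V.comp (ContinuousLinearMap.snd ℂ H H)).prod
      (V.comp (ContinuousLinearMap.fst ℂ H H)) with hA
  ext z
  set e : H × H → H × H := fun pq => (pq.1 + pq.2, pq.1 - pq.2) with he_def
  have he : Function.Bijective e := by
    rw [Function.bijective_iff_has_inverse]
    refine ⟨fun y => ((2 : ℂ)⁻¹ • (y.1 + y.2), (2 : ℂ)⁻¹ • (y.1 - y.2)), ?_, ?_⟩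
    · intro y; refine Prod.ext ?_ ?_ <;> simp [he_def] <;> module
    · intro y; refine Prod.ext ?_ ?_ <;> simp [he_def] <;> module
  have key : ∀ z : ℂ, Function.Bijective ⇑(algebraMap ℂ (H × H →L[ℂ] H × H) z - A) ↔
      (Function.Bijective ⇑(algebraMap ℂ (H →L[ℂ] H) z - V) ∧
       Function.Bijective ⇑(algebraMap ℂ (H →L[ℂ] H) z + V)) := by
    intro z
    have hcomm : e ∘ ⇑(algebraMap ℂ (H × H →L[ℂ] H × H) z - A) =
        (Prod.map ⇑(algebraMap ℂ (H →L[ℂ] H) z - V) ⇑(algebraMap ℂ (H →L[ℂ] H) z + V)) ∘ e := by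
      funext pq
      simp only [Function.comp_apply, Prod.map, he_def, Algebra.algebraMap_eq_smul_one,
        ContinuousLinearMap.sub_apply, ContinuousLinearMap.add_apply, hA,
        ContinuousLinearMap.prod_apply, ContinuousLinearMap.comp_apply,
        ContinuousLinearMap.coe_snd', ContinuousLinearMap.coe_fst',
        ContinuousLinearMap.smul_apply, ContinuousLinearMap.one_apply,
        Prod.smul_mk, Prod.mk_sub_mk, map_add, map_sub]
      refine Prod.ext ?_ ?_ <;> simp <;> module
    constructor
    · intro hbij
      have h1 : Function.Bijective (e ∘ ⇑(algebraMap ℂ (H × H →L[ℂ] H × H) z - A)) :=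
        he.comp hbij
      rw [hcomm] at h1
      exact Prod.map_bijective.mp ((Function.Bijective.of_comp_iff _ he).mp h1)
    · intro ⟨h1, h2⟩
      have hpm := (Prod.map_bijective.mpr ⟨h1, h2⟩).comp he
      rw [← hcomm] at hpm
      exact (Function.Bijective.of_comp_iff' he _).mp hpm
  rw [spectrum.mem_iff, Set.mem_union, Set.mem_neg, spectrum.mem_iff, spectrum.mem_iff,
    ContinuousLinearMap.isUnit_iff_bijective, ContinuousLinearMap.isUnit_iff_bijective,
    ContinuousLinearMap.isUnit_iff_bijective, key z]
  have hneg : (algebraMap ℂ (H →L[ℂ] H) (-z) - V) = -(algebraMap ℂ (H →L[ℂ] H) z + V) := by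
    rw [map_neg]; abel
  rw [hneg]
  have hnb : Function.Bijective ⇑(-(algebraMap ℂ (H →L[ℂ] H) z + V)) ↔
      Function.Bijective ⇑(algebraMap ℂ (H →L[ℂ] H) z + V) := by
    have hfe : ⇑(-(algebraMap ℂ (H →L[ℂ] H) z + V)) =
        ⇑(Equiv.neg H) ∘ ⇑(algebraMap ℂ (H →L[ℂ] H) z + V) := by
      funext x; simp
    rw [hfe, Function.Bijective.of_comp_iff' (Equiv.neg H).bijective]
  rw [hnb]
  tauto
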